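/- Let a > 0 and c ∈ ℝ, and define F : (0, ∞) → ℝ by F(n) = logit( Φ(a·√n − c) ). Then F′(n) → a²/2 as n → ∞. -/

import Mathlib

open Real Filter MeasureTheory

/-- The standard normal density `φ(t) = (2π)^{-1/2} exp(-t²/2)`. -/
noncomputable def stdNormalPDF (t : ℝ) : ℝ :=
  (Real.sqrt (2 * Real.pi))⁻¹ * Real.exp (-(t ^ 2) / 2)

/-- The standard normal CDF `Φ(x) = ∫_{-∞}^x φ(t) dt`. -/
noncomputable def stdNormalCDF (x : ℝ) : ℝ :=
  ∫ t in Set.Iic x, stdNormalPDF t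

/-- `logit(x) = log(x) − log(1−x)`. -/
noncomputable def logit (x : ℝ) : ℝ :=
  Real.log x - Real.log (1 - x)

open Set




lemma pdf_eq (t : ℝ) : stdNormalPDF t = (Real.sqrt (2 * Real.pi))⁻¹ * Real.exp (-(1/2) * t ^ 2) := by
  rw [stdNormalPDF]; ring_nf

lemma pdf_pos (t : ℝ) : 0 < stdNormalPDF t := by
  have : 0 < Real.sqrt (2 * Real.pi) := Real.sqrt_pos.2 (by positivity)
  exact mul_pos (inv_pos.2 this) (Real.exp_pos _)

lemma pdf_cont : Continuous stdNormalPDF := by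
  unfold stdNormalPDF; continuity

lemma pdf_integrable : Integrable stdNormalPDF := by
  have : Integrable (fun t : ℝ => Real.exp (-(1/2) * t ^ 2)) := integrable_exp_neg_mul_sq (by norm_num)
  have h2 := this.const_mul (Real.sqrt (2 * Real.pi))⁻¹
  refine h2.congr (Eventually.of_forall fun t => ?_)
  rw [pdf_eq]

lemma pdf_total : ∫ t, stdNormalPDF t = 1 := by
  have h := integral_gaussian (1/2 : ℝ)
  simp only [pdf_eq]
  rw [MeasureTheory.integral_const_mul, h]
  rw [show Real.pi / (1/2) = 2 * Real.pi by ring]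
  exact inv_mul_cancel₀ (ne_of_gt (Real.sqrt_pos.2 (by positivity)))

lemma cdf_add_tail (x : ℝ) : stdNormalCDF x + ∫ t in Set.Ioi x, stdNormalPDF t = 1 := by
  rw [stdNormalCDF, intervalIntegral.integral_Iic_add_Ioi pdf_integrable.integrableOn
    pdf_integrable.integrableOn, pdf_total]

lemma tail_eq (x : ℝ) : (∫ t in Set.Ioi x, stdNormalPDF t) = 1 - stdNormalCDF x := by
  linarith [cdf_add_tail x]

lemma cdf_pos (x : ℝ) : 0 < stdNormalCDF x := by
  rw [stdNormalCDF]
  apply (setIntegral_pos_iff_support_of_nonneg_ae ?_ pdf_integrable.integrableOn).2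
  · have : Function.support stdNormalPDF = Set.univ := by
      ext t; simp [Function.mem_support, (pdf_pos t).ne']
    rw [this, Set.univ_inter]
    simp [Real.volume_Iic]
  · exact Eventually.of_forall fun t => (pdf_pos t).le

lemma tail_pos (x : ℝ) : 0 < ∫ t in Set.Ioi x, stdNormalPDF t := by
  apply (setIntegral_pos_iff_support_of_nonneg_ae ?_ pdf_integrable.integrableOn).2
  · have : Function.support stdNormalPDF = Set.univ := by
      ext t; simp [Function.mem_support, (pdf_pos t).ne']
    rw [this, Set.univ_inter]
    simp [Real.volume_Ioi]
  · exact Eventually.of_forall fun t => (pdf_pos t).le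

lemma cdf_lt_one (x : ℝ) : stdNormalCDF x < 1 := by
  have := tail_pos x; rw [tail_eq] at this; linarith

lemma hasDerivAt_cdf (x : ℝ) : HasDerivAt stdNormalCDF (stdNormalPDF x) x := by
  have key : ∀ y, stdNormalCDF y = stdNormalCDF 0 + ∫ t in (0:ℝ)..y, stdNormalPDF t := by
    intro y
    rw [← intervalIntegral.integral_Iic_sub_Iic pdf_integrable.integrableOn
      pdf_integrable.integrableOn]
    unfold stdNormalCDF; ring
  have h : HasDerivAt (fun u => ∫ t in (0:ℝ)..u, stdNormalPDF t) (stdNormalPDF x) x :=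
    intervalIntegral.integral_hasDerivAt_right pdf_integrable.intervalIntegrable
      pdf_cont.stronglyMeasurable.stronglyMeasurableAtFilter pdf_cont.continuousAt
  have := (h.const_add (stdNormalCDF 0))
  exact this.congr_of_eventuallyEq (Eventually.of_forall fun y => key y)

lemma hasDerivAt_neg_pdf (t : ℝ) :
    HasDerivAt (fun s : ℝ => -stdNormalPDF s) (t * stdNormalPDF t) t := by
  have h1 : HasDerivAt (fun s : ℝ => -(s ^ 2) / 2) (-t) t := by
    have := ((hasDerivAt_pow 2 t).neg.div_const 2)
    norm_num at this
    exact this.congr_deriv (by ring)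
  have h2 := ((h1.exp).const_mul ((Real.sqrt (2 * Real.pi))⁻¹)).neg
  have e : (fun s : ℝ => -stdNormalPDF s) = -fun y => (√(2 * π))⁻¹ * rexp (-y ^ 2 / 2) := by
    funext s; simp [stdNormalPDF]
  rw [e]; exact h2.congr_deriv (by rw [stdNormalPDF]; ring)

lemma pdf_tendsto_zero : Tendsto stdNormalPDF atTop (nhds 0) := by
  have h1 : Tendsto (fun t : ℝ => -(t ^ 2) / 2) atTop atBot := by
    apply Tendsto.atBot_div_const (by norm_num)
    exact (tendsto_pow_atTop (by norm_num : (2:ℕ) ≠ 0)) |> tendsto_neg_atTop_atBot.comp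
  have h2 := Real.tendsto_exp_atBot.comp h1
  have h3 := h2.const_mul ((Real.sqrt (2 * Real.pi))⁻¹)
  rw [mul_zero] at h3
  refine h3.congr fun t => ?_
  rw [stdNormalPDF]; rfl

lemma mul_pdf_integrableOn (x : ℝ) :
    IntegrableOn (fun t => t * stdNormalPDF t) (Set.Ioi x) := by
  have : Integrable (fun t : ℝ => t * stdNormalPDF t) := by
    have h := (integrable_mul_exp_neg_mul_sq (by norm_num : (0:ℝ) < 1/2)).const_mul
      ((Real.sqrt (2 * Real.pi))⁻¹)
    refine h.congr (Eventually.of_forall fun t => ?_)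
    simp only [pdf_eq]; ring
  exact this.integrableOn

lemma integral_Ioi_mul_pdf (x : ℝ) :
    ∫ t in Set.Ioi x, t * stdNormalPDF t = stdNormalPDF x := by
  have h := integral_Ioi_of_hasDerivAt_of_tendsto' (f := fun s => -stdNormalPDF s)
    (f' := fun t => t * stdNormalPDF t) (a := x)
    (fun t _ => hasDerivAt_neg_pdf t) (mul_pdf_integrableOn x)
    (by simpa using pdf_tendsto_zero.neg)
  simpa using h

lemma mills_upper {x : ℝ} (hx : 0 < x) :
    (∫ t in Set.Ioi x, stdNormalPDF t) ≤ stdNormalPDF x / x := by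
  have h1 : (∫ t in Set.Ioi x, stdNormalPDF t) ≤ ∫ t in Set.Ioi x, (t / x) * stdNormalPDF t := by
    apply setIntegral_mono_on pdf_integrable.integrableOn
      ((mul_pdf_integrableOn x).const_mul x⁻¹ |>.congr
        (Eventually.of_forall fun t => by ring)) measurableSet_Ioi
    intro t ht
    have h2 : 1 ≤ t / x := (one_le_div hx).2 (le_of_lt ht)
    nlinarith [pdf_pos t]
  calc (∫ t in Set.Ioi x, stdNormalPDF t) ≤ ∫ t in Set.Ioi x, (t / x) * stdNormalPDF t := h1
    _ = x⁻¹ * ∫ t in Set.Ioi x, t * stdNormalPDF t := by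
        rw [← integral_const_mul]
        congr 1; ext t; ring
    _ = stdNormalPDF x / x := by rw [integral_Ioi_mul_pdf]; ring

lemma hasDerivAt_negG (t : ℝ) :
    HasDerivAt (fun s : ℝ => -(s / (1 + s ^ 2) * stdNormalPDF s))
      (stdNormalPDF t - 2 * stdNormalPDF t / (1 + t ^ 2) ^ 2) t := by
  have hd : (1:ℝ) + t ^ 2 ≠ 0 := by positivity
  have h1 : HasDerivAt (fun s : ℝ => s / (1 + s ^ 2))
      ((1 * (1 + t ^ 2) - t * (0 + 2 * t ^ 1)) / (1 + t ^ 2) ^ 2) t :=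
    (hasDerivAt_id t).div ((hasDerivAt_const t (1:ℝ)).add (hasDerivAt_pow 2 t)) hd
  have hpdf : HasDerivAt stdNormalPDF (-(t * stdNormalPDF t)) t := by
    simpa [Pi.neg_def] using (hasDerivAt_neg_pdf t).neg
  have h2 := (h1.mul hpdf).neg
  exact h2.congr_deriv (by field_simp; ring)

lemma negG_tendsto :
    Tendsto (fun s : ℝ => -(s / (1 + s ^ 2) * stdNormalPDF s)) atTop (nhds 0) := by
  have h0 : Tendsto (fun s : ℝ => s⁻¹ + s) atTop atTop :=
    tendsto_inv_atTop_zero.add_atTop tendsto_id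
  have h1 : Tendsto (fun s : ℝ => s / (1 + s ^ 2)) atTop (nhds 0) := by
    apply Tendsto.congr' (f₁ := fun s : ℝ => 1 / (s⁻¹ + s))
    · filter_upwards [eventually_gt_atTop 0] with s hs
      rw [div_eq_div_iff (by positivity) (by positivity)]
      field_simp
    · exact tendsto_const_nhds.div_atTop h0
  have := (h1.mul pdf_tendsto_zero).neg
  simpa using this

lemma intOn_corr (x : ℝ) :
    IntegrableOn (fun t : ℝ => 2 * stdNormalPDF t / (1 + t ^ 2) ^ 2) (Set.Ioi x) := by
  apply Integrable.mono' ((pdf_integrable.integrableOn (s := Set.Ioi x)).const_mul 2)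
  · exact ((continuous_const.mul pdf_cont : Continuous fun t => 2 * stdNormalPDF t).div (by continuity)
      (fun t => by positivity)).aestronglyMeasurable.restrict
  · refine Eventually.of_forall fun t => ?_
    rw [Real.norm_eq_abs, abs_of_nonneg (div_nonneg (by linarith [pdf_pos t]) (by positivity))]
    rw [div_le_iff₀ (by positivity)]
    have h1 : (1:ℝ) ≤ (1 + t ^ 2) ^ 2 := by nlinarith [sq_nonneg t]
    nlinarith [pdf_pos t]

lemma mills_lower {x : ℝ} (hx : 0 < x) :
    x / (1 + x ^ 2) * stdNormalPDF x ≤ ∫ t in Set.Ioi x, stdNormalPDF t := by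
  have hInt : IntegrableOn
      (fun t : ℝ => stdNormalPDF t - 2 * stdNormalPDF t / (1 + t ^ 2) ^ 2) (Set.Ioi x) :=
    pdf_integrable.integrableOn.sub (intOn_corr x)
  have key := integral_Ioi_of_hasDerivAt_of_tendsto'
    (f := fun s : ℝ => -(s / (1 + s ^ 2) * stdNormalPDF s))
    (f' := fun t : ℝ => stdNormalPDF t - 2 * stdNormalPDF t / (1 + t ^ 2) ^ 2) (a := x)
    (fun t _ => hasDerivAt_negG t) hInt (by simpa using negG_tendsto)
  have hsplit : (∫ t in Set.Ioi x, (stdNormalPDF t - 2 * stdNormalPDF t / (1 + t ^ 2) ^ 2))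
      = (∫ t in Set.Ioi x, stdNormalPDF t)
        - ∫ t in Set.Ioi x, 2 * stdNormalPDF t / (1 + t ^ 2) ^ 2 :=
    integral_sub pdf_integrable.integrableOn (intOn_corr x)
  have hnonneg : 0 ≤ ∫ t in Set.Ioi x, 2 * stdNormalPDF t / (1 + t ^ 2) ^ 2 := by
    apply setIntegral_nonneg measurableSet_Ioi
    intro t _
    exact div_nonneg (by linarith [pdf_pos t]) (by positivity)
  rw [hsplit] at key
  simp only [zero_sub, neg_neg] at key
  linarith

lemma sqrt_tendsto_atTop : Tendsto Real.sqrt atTop atTop := by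
  apply tendsto_atTop_atTop.2
  intro b
  refine ⟨b ^ 2 ⊔ 0, fun x hx => ?_⟩
  have h2 : b ^ 2 ≤ x := le_trans (le_max_left _ _) hx
  calc b ≤ |b| := le_abs_self b
    _ = Real.sqrt (b ^ 2) := (Real.sqrt_sq_eq_abs b).symm
    _ ≤ Real.sqrt x := Real.sqrt_le_sqrt h2

lemma cdf_tendsto_one : Tendsto stdNormalCDF atTop (nhds 1) := by
  have h : Tendsto (fun x => 1 - stdNormalCDF x) atTop (nhds 0) := by
    apply tendsto_of_tendsto_of_tendsto_of_le_of_le' (g := fun _ : ℝ => (0:ℝ))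
      (h := fun x => stdNormalPDF x / x) tendsto_const_nhds
      (pdf_tendsto_zero.div_atTop tendsto_id)
    · filter_upwards with x
      rw [← tail_eq]; exact (tail_pos x).le
    · filter_upwards [eventually_gt_atTop 0] with x hx
      rw [← tail_eq]; exact mills_upper hx
  have h2 := (tendsto_const_nhds (x := (1:ℝ)) (f := atTop)).sub h
  simpa using h2

lemma hasDerivAt_logit {y : ℝ} (h0 : 0 < y) (h1 : y < 1) :
    HasDerivAt logit (y⁻¹ + (1 - y)⁻¹) y := by
  have ha : HasDerivAt Real.log y⁻¹ y := Real.hasDerivAt_log h0.ne'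
  have hb : HasDerivAt (fun x : ℝ => 1 - x) (-1) y := by
    simpa using (hasDerivAt_id y).const_sub 1
  have hc := (Real.hasDerivAt_log (by linarith : (1:ℝ) - y ≠ 0)).comp y hb
  have h2 := ha.sub hc
  have h3 : y⁻¹ + (1 - y)⁻¹ = y⁻¹ - (1 - y)⁻¹ * -1 := by ring
  rw [h3]
  exact h2.congr_of_eventuallyEq (Eventually.of_forall fun x => by simp [logit, Function.comp])

lemma hasDerivAt_F (a c : ℝ) {n : ℝ} (hn : 0 < n) :
    HasDerivAt (fun n : ℝ => logit (stdNormalCDF (a * Real.sqrt n - c)))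
      (((stdNormalCDF (a * Real.sqrt n - c))⁻¹ + (1 - stdNormalCDF (a * Real.sqrt n - c))⁻¹)
        * (stdNormalPDF (a * Real.sqrt n - c) * (a * (1 / (2 * Real.sqrt n))))) n := by
  have hg : HasDerivAt (fun n : ℝ => a * Real.sqrt n - c) (a * (1 / (2 * Real.sqrt n))) n :=
    ((Real.hasDerivAt_sqrt hn.ne').const_mul a).sub_const c
  have hΦ := (hasDerivAt_cdf (a * Real.sqrt n - c)).comp n hg
  have hl := (hasDerivAt_logit (cdf_pos (a * Real.sqrt n - c))
    (cdf_lt_one (a * Real.sqrt n - c))).comp n hΦ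
  exact hl


/-- Let `a > 0` and `c ∈ ℝ`, and let `F(n) = logit(Φ(a·√n − c))`.
Then `F′(n) → a²/2` as `n → ∞`. -/
theorem tendsto_deriv_logit_pos (a c : ℝ) (ha : 0 < a) :
    Tendsto (deriv fun n : ℝ => logit (stdNormalCDF (a * Real.sqrt n - c))) atTop
      (nhds (a ^ 2 / 2)) := by
  set g : ℝ → ℝ := fun n => a * Real.sqrt n - c with hgdef
  set m : ℝ → ℝ := fun n => a * (1 / (2 * Real.sqrt n)) with hmdef
  have hgtop : Tendsto g atTop atTop := by
    have h1 : Tendsto (fun n : ℝ => a * Real.sqrt n) atTop atTop :=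
      sqrt_tendsto_atTop.const_mul_atTop ha
    simpa [hgdef, sub_eq_add_neg] using tendsto_atTop_add_const_right atTop (-c) h1
  have hΦ1 : Tendsto (fun n => stdNormalCDF (g n)) atTop (nhds 1) := cdf_tendsto_one.comp hgtop
  have hpdf0 : Tendsto (fun n => stdNormalPDF (g n)) atTop (nhds 0) := pdf_tendsto_zero.comp hgtop
  have hm0 : Tendsto m atTop (nhds 0) := by
    have h2 : Tendsto (fun n : ℝ => 2 * Real.sqrt n) atTop atTop :=
      sqrt_tendsto_atTop.const_mul_atTop two_pos
    have := (tendsto_const_nhds (x := (1:ℝ)) (f := atTop)).div_atTop h2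
    simpa [hmdef] using this.const_mul a
  -- part A
  have hA : Tendsto (fun n => (stdNormalCDF (g n))⁻¹ * (stdNormalPDF (g n) * m n)) atTop
      (nhds 0) := by
    have := (hΦ1.inv₀ one_ne_zero).mul (hpdf0.mul hm0)
    simpa using this
  -- part B bounds
  have hLow : Tendsto (fun n => g n * m n) atTop (nhds (a ^ 2 / 2)) := by
    have h1 : Tendsto (fun n : ℝ => a ^ 2 / 2 - c * m n) atTop (nhds (a ^ 2 / 2)) := by
      have h2 := (tendsto_const_nhds (x := a ^ 2 / 2) (f := atTop)).sub (hm0.const_mul c)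
      rw [mul_zero, sub_zero] at h2
      exact h2
    apply h1.congr'
    filter_upwards [eventually_gt_atTop 0] with n hn
    have hs : 0 < Real.sqrt n := Real.sqrt_pos.2 hn
    simp only [hgdef, hmdef]
    field_simp
  have hUp : Tendsto (fun n => g n * m n + (g n)⁻¹ * m n) atTop (nhds (a ^ 2 / 2)) := by
    have h1 : Tendsto (fun n => (g n)⁻¹ * m n) atTop (nhds 0) := by
      have := (hgtop.inv_tendsto_atTop).mul hm0
      simpa using this
    simpa using hLow.add h1
  have hB : Tendsto (fun n => (1 - stdNormalCDF (g n))⁻¹ * (stdNormalPDF (g n) * m n)) atTop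
      (nhds (a ^ 2 / 2)) := by
    apply tendsto_of_tendsto_of_tendsto_of_le_of_le' hLow hUp
    · filter_upwards [hgtop.eventually (eventually_gt_atTop 0), eventually_gt_atTop 0]
        with n hgn hn
      have hs : 0 < Real.sqrt n := Real.sqrt_pos.2 hn
      have hmn : 0 < m n := by simp only [hmdef]; positivity
      have htail : 0 < 1 - stdNormalCDF (g n) := by
        rw [← tail_eq]; exact tail_pos _
      have hmu := mills_upper hgn
      rw [tail_eq, le_div_iff₀ hgn] at hmu
      rw [inv_mul_eq_div, le_div_iff₀ htail]
      nlinarith [pdf_pos (g n)]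
    · filter_upwards [hgtop.eventually (eventually_gt_atTop 0), eventually_gt_atTop 0]
        with n hgn hn
      have hs : 0 < Real.sqrt n := Real.sqrt_pos.2 hn
      have hmn : 0 < m n := by simp only [hmdef]; positivity
      have htail : 0 < 1 - stdNormalCDF (g n) := by
        rw [← tail_eq]; exact tail_pos _
      have hml := mills_lower hgn
      rw [tail_eq, div_mul_eq_mul_div, div_le_iff₀ (by positivity : (0:ℝ) < 1 + g n ^ 2)] at hml
      rw [inv_mul_eq_div, div_le_iff₀ htail]
      have h3 := mul_le_mul_of_nonneg_right hml hmn.le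
      apply le_of_mul_le_mul_left ?_ hgn
      have h5 : g n * ((g n * m n + (g n)⁻¹ * m n) * (1 - stdNormalCDF (g n)))
          = (1 - stdNormalCDF (g n)) * (1 + g n ^ 2) * m n := by
        field_simp
        ring
      rw [h5]
      linear_combination h3
  -- combine
  have htot := hA.add hB
  rw [zero_add] at htot
  apply htot.congr'
  filter_upwards [eventually_gt_atTop 0] with n hn
  have h := (hasDerivAt_F a c hn).deriv
  rw [h]
  simp only [hgdef, hmdef]
  ring
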